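/- Let μ be a finite Borel measure on ℝ and for a ∈ ℝ let μ_a denote the push-forward of μ under translation by a. If the total variation distance ‖μ_a − μ‖_TV tends to 0 as a → 0, then μ is absolutely continuous with respect to Lebesgue measure. -/

import Mathlib

/-!
If `t` is Lebesgue-null, Fubini and translation invariance of Lebesgue measure give
`μ (t - a) = μ_a t = 0` for almost every `a`. Since `μ t ≤ μ_a t + ‖μ_a - μ‖_TV` and every
neighbourhood of `0` has positive Lebesgue measure, such `a` can be taken arbitrarily close to `0`,
so `μ t` is bounded by arbitrarily small total variation distances.
-/

open MeasureTheory Filter Topology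

namespace MeasureTheory.Measure

theorem le_add_totalVariation_sub {α : Type*} [MeasurableSpace α]
    (μ ν : Measure α) [IsFiniteMeasure μ] [IsFiniteMeasure ν] {A : Set α} (hA : MeasurableSet A) :
    μ A ≤ ν A + (ν.toSignedMeasure - μ.toSignedMeasure).totalVariation Set.univ := by
  set s := ν.toSignedMeasure - μ.toSignedMeasure
  have hsA : s A = ν.real A - μ.real A := by
    simp [s, toSignedMeasure_apply_measurable hA, measureReal_def]
  calc μ A = ENNReal.ofReal (μ.real A) := (ofReal_measureReal (measure_ne_top μ A)).symm
    _ ≤ ENNReal.ofReal (ν.real A + ‖s A‖) := by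
        gcongr
        rw [hsA, Real.norm_eq_abs]
        linarith [neg_abs_le (ν.real A - μ.real A)]
    _ = ν A + ‖s A‖ₑ := by
        rw [ENNReal.ofReal_add measureReal_nonneg (norm_nonneg _), ofReal_norm,
          ofReal_measureReal (measure_ne_top ν A)]
    _ ≤ ν A + s.totalVariation Set.univ := by
        gcongr
        exact (s.enorm_le_totalVariation A).trans (measure_mono (Set.subset_univ A))

theorem ae_measure_preimage_add_right_eq_zero {G : Type*} [MeasurableSpace G]
    [AddGroup G] [MeasurableAdd₂ G] (μ ν : Measure G) [SFinite μ] [SFinite ν]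
    [ν.IsAddLeftInvariant] {t : Set G} (ht : MeasurableSet t) (hνt : ν t = 0) :
    ∀ᵐ a ∂ν, μ ((· + a) ⁻¹' t) = 0 := by
  have hs : MeasurableSet {p : G × G | p.2 + p.1 ∈ t} :=
    ht.preimage (measurable_snd.add measurable_fst)
  have hprod : ν.prod μ {p | p.2 + p.1 ∈ t} = 0 := by
    rw [prod_apply_symm hs]
    have hsection : ∀ x : G, (fun a => (a, x)) ⁻¹' {p : G × G | p.2 + p.1 ∈ t} = (x + ·) ⁻¹' t :=
      fun _ => rfl
    simp_rw [hsection, measure_preimage_add, hνt, lintegral_zero]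
  exact measure_ae_null_of_prod_null hprod

instance nhds_inf_ae_neBot {X : Type*} [TopologicalSpace X] [MeasurableSpace X]
    (μ : Measure X) [μ.IsOpenPosMeasure] (x : X) : (𝓝 x ⊓ ae μ).NeBot := by
  refine inf_neBot_iff.2 fun U hU V hV => nonempty_of_measure_ne_zero (μ := μ) ?_
  rw [measure_inter_conull hV]
  exact (μ.measure_pos_of_mem_nhds hU).ne'

end MeasureTheory.Measure

/-- If the total variation distance between a finite Borel measure on ℝ and its
translates tends to 0 as the translation tends to 0, then the measure is
absolutely continuous with respect to Lebesgue measure. -/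
theorem stmt_0 (μ : Measure ℝ) [IsFiniteMeasure μ]
    (h : Tendsto (fun a : ℝ =>
      ((μ.map (fun x => x + a)).toSignedMeasure - μ.toSignedMeasure).totalVariation Set.univ)
      (nhds 0) (nhds 0)) :
    μ ≪ (volume : Measure ℝ) := by
  refine Measure.AbsolutelyContinuous.mk fun t ht ht0 => ?_
  have hle : ∀ᶠ a in 𝓝 0 ⊓ ae volume, μ t ≤
      ((μ.map (fun x => x + a)).toSignedMeasure - μ.toSignedMeasure).totalVariation Set.univ := by
    refine (Measure.ae_measure_preimage_add_right_eq_zero μ volume ht ht0).filter_mono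
      inf_le_right |>.mono fun a ha => ?_
    simpa [Measure.map_apply (measurable_add_const a) ht, ha] using
      Measure.le_add_totalVariation_sub μ (μ.map (· + a)) ht
  exact nonpos_iff_eq_zero.1 (ge_of_tendsto (h.mono_left inf_le_left) hle)
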